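/- The set H(Ω) of all finite Hausdorff continuous interval-valued functions on an open set Ω ⊆ ℝⁿ, equipped with the partial order u ≤ v iff u̲(x) ≤ v̲(x) and ū(x) ≤ v̄(x) for all x ∈ Ω, is Dedekind order complete: every nonempty subset of H(Ω) that is bounded above has a supremum in H(Ω). -/
import Mathlib


open scoped Classical

/-- Lower Baire operator (relative to `Ω`):
`I(g)(x) = sup_{δ>0} inf { g(y) : y ∈ Ω, ‖y − x‖ < δ }`. -/
noncomputable def baireLower {n : ℕ} (Ω : Set (Fin n → ℝ))
    (g : (Fin n → ℝ) → EReal) (x : Fin n → ℝ) : EReal :=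
  ⨆ δ : {d : ℝ // 0 < d}, ⨅ y : {y : Fin n → ℝ // y ∈ Ω ∧ dist y x < δ.1}, g y.1

/-- Upper Baire operator (relative to `Ω`):
`S(g)(x) = inf_{δ>0} sup { g(y) : y ∈ Ω, ‖y − x‖ < δ }`. -/
noncomputable def baireUpper {n : ℕ} (Ω : Set (Fin n → ℝ))
    (g : (Fin n → ℝ) → EReal) (x : Fin n → ℝ) : EReal :=
  ⨅ δ : {d : ℝ // 0 < d}, ⨆ y : {y : Fin n → ℝ // y ∈ Ω ∧ dist y x < δ.1}, g y.1

/-- An interval-valued function, given by its endpoint functions `u = [u.1, u.2]`,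
is S-continuous on `Ω` if it is a well-formed interval function fixed by the
Baire operators: `F(u) = [I(u̲), S(ū)] = u` on `Ω`. -/
def SCont {n : ℕ} (Ω : Set (Fin n → ℝ))
    (u : ((Fin n → ℝ) → EReal) × ((Fin n → ℝ) → EReal)) : Prop :=
  (∀ x ∈ Ω, u.1 x ≤ u.2 x) ∧
  (∀ x ∈ Ω, baireLower Ω u.1 x = u.1 x ∧ baireUpper Ω u.2 x = u.2 x)

/-- `u` is Hausdorff continuous on `Ω`: S-continuous and minimal with respect to
interval inclusion among S-continuous interval functions. -/
def HCont {n : ℕ} (Ω : Set (Fin n → ℝ))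
    (u : ((Fin n → ℝ) → EReal) × ((Fin n → ℝ) → EReal)) : Prop :=
  SCont Ω u ∧
  ∀ v, SCont Ω v → (∀ x ∈ Ω, u.1 x ≤ v.1 x ∧ v.2 x ≤ u.2 x) →
    ∀ x ∈ Ω, v.1 x = u.1 x ∧ v.2 x = u.2 x

/-- A finite (real-endpoint) interval-valued function that is Hausdorff
continuous on Ω. -/
def HContR {n : ℕ} (Ω : Set (Fin n → ℝ))
    (p : ((Fin n → ℝ) → ℝ) × ((Fin n → ℝ) → ℝ)) : Prop :=
  HCont Ω (fun x => (p.1 x : EReal), fun x => (p.2 x : EReal))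

/-- The partial order on H(Ω): componentwise order of the endpoint functions
on Ω. -/
def leH {n : ℕ} (Ω : Set (Fin n → ℝ))
    (p q : ((Fin n → ℝ) → ℝ) × ((Fin n → ℝ) → ℝ)) : Prop :=
  ∀ x ∈ Ω, p.1 x ≤ q.1 x ∧ p.2 x ≤ q.2 x

section Aux

variable {n : ℕ} {Ω : Set (Fin n → ℝ)}

lemma bl_mono {g h : (Fin n → ℝ) → EReal} (H : ∀ y ∈ Ω, g y ≤ h y) (x : Fin n → ℝ) :
    baireLower Ω g x ≤ baireLower Ω h x :=
  iSup_mono fun δ => iInf_mono fun y => H y.1 y.2.1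

lemma bu_mono {g h : (Fin n → ℝ) → EReal} (H : ∀ y ∈ Ω, g y ≤ h y) (x : Fin n → ℝ) :
    baireUpper Ω g x ≤ baireUpper Ω h x :=
  iInf_mono fun δ => iSup_mono fun y => H y.1 y.2.1

lemma bl_congr {g h : (Fin n → ℝ) → EReal} (H : ∀ y ∈ Ω, g y = h y) (x : Fin n → ℝ) :
    baireLower Ω g x = baireLower Ω h x :=
  le_antisymm (bl_mono (fun y hy => (H y hy).le) x) (bl_mono (fun y hy => (H y hy).ge) x)

lemma bu_congr {g h : (Fin n → ℝ) → EReal} (H : ∀ y ∈ Ω, g y = h y) (x : Fin n → ℝ) :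
    baireUpper Ω g x = baireUpper Ω h x :=
  le_antisymm (bu_mono (fun y hy => (H y hy).le) x) (bu_mono (fun y hy => (H y hy).ge) x)

lemma bl_le_self {g : (Fin n → ℝ) → EReal} {x : Fin n → ℝ} (hx : x ∈ Ω) :
    baireLower Ω g x ≤ g x :=
  iSup_le fun δ => iInf_le_of_le ⟨x, hx, by simpa using δ.2⟩ le_rfl

lemma le_bu_self {g : (Fin n → ℝ) → EReal} {x : Fin n → ℝ} (hx : x ∈ Ω) :
    g x ≤ baireUpper Ω g x :=
  le_iInf fun δ => le_iSup_of_le ⟨x, hx, by simpa using δ.2⟩ le_rfl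

lemma bl_idem (g : (Fin n → ℝ) → EReal) (x : Fin n → ℝ) :
    baireLower Ω (baireLower Ω g) x = baireLower Ω g x := by
  refine le_antisymm (bl_mono (fun y hy => bl_le_self hy) x) ?_
  refine iSup_le fun δ => le_iSup_of_le (⟨δ.1 / 2, half_pos δ.2⟩ : {d : ℝ // 0 < d}) ?_
  refine le_iInf fun y => le_iSup_of_le (⟨δ.1 / 2, half_pos δ.2⟩ : {d : ℝ // 0 < d}) ?_
  refine le_iInf fun z => iInf_le_of_le ⟨z.1, z.2.1, ?_⟩ le_rfl
  calc dist z.1 x ≤ dist z.1 y.1 + dist y.1 x := dist_triangle _ _ _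
    _ < δ.1 / 2 + δ.1 / 2 := add_lt_add z.2.2 y.2.2
    _ = δ.1 := add_halves _

lemma bu_idem (g : (Fin n → ℝ) → EReal) (x : Fin n → ℝ) :
    baireUpper Ω (baireUpper Ω g) x = baireUpper Ω g x := by
  refine le_antisymm ?_ (bu_mono (fun y hy => le_bu_self hy) x)
  refine le_iInf fun δ => iInf_le_of_le (⟨δ.1 / 2, half_pos δ.2⟩ : {d : ℝ // 0 < d}) ?_
  refine iSup_le fun y => iInf_le_of_le (⟨δ.1 / 2, half_pos δ.2⟩ : {d : ℝ // 0 < d}) ?_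
  refine iSup_le fun z => le_iSup_of_le ⟨z.1, z.2.1, ?_⟩ le_rfl
  calc dist z.1 x ≤ dist z.1 y.1 + dist y.1 x := dist_triangle _ _ _
    _ < δ.1 / 2 + δ.1 / 2 := add_lt_add z.2.2 y.2.2
    _ = δ.1 := add_halves _

/-- For an H-continuous `u`, each endpoint determines the other:
`S(u₁) = u₂` and `I(u₂) = u₁` on `Ω`. -/
lemma hcont_keys {u : ((Fin n → ℝ) → EReal) × ((Fin n → ℝ) → EReal)} (hu : HCont Ω u) :
    ∀ x ∈ Ω, baireUpper Ω u.1 x = u.2 x ∧ baireLower Ω u.2 x = u.1 x := by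
  intro x hx
  obtain ⟨⟨hle, hfix⟩, hmin⟩ := hu
  constructor
  · exact (hmin (u.1, baireUpper Ω u.1)
      ⟨fun y hy => le_bu_self hy, fun y hy => ⟨(hfix y hy).1, bu_idem _ _⟩⟩
      (fun y hy => ⟨le_rfl, (bu_mono hle y).trans_eq (hfix y hy).2⟩) x hx).2
  · exact (hmin (baireLower Ω u.2, u.2)
      ⟨fun y hy => bl_le_self hy, fun y hy => ⟨bl_idem _ _, (hfix y hy).2⟩⟩
      (fun y hy => ⟨((hfix y hy).1).symm.trans_le (bl_mono hle y), le_rfl⟩) x hx).1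

end Aux

/-- H(Ω), the finite Hausdorff continuous interval-valued
functions on an open Ω ⊆ ℝⁿ with the componentwise order, is Dedekind order
complete: every nonempty subset bounded above has a least upper bound in H(Ω). -/
theorem statement_5 (n : ℕ) (Ω : Set (Fin n → ℝ)) (hΩ : IsOpen Ω)
    (S : Set (((Fin n → ℝ) → ℝ) × ((Fin n → ℝ) → ℝ)))
    (hS : ∀ p ∈ S, HContR Ω p) (hne : S.Nonempty)
    (hbdd : ∃ b, HContR Ω b ∧ ∀ p ∈ S, leH Ω p b) :
    ∃ s, HContR Ω s ∧ (∀ p ∈ S, leH Ω p s) ∧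
      ∀ b, HContR Ω b → (∀ p ∈ S, leH Ω p b) → leH Ω s b := by
  obtain ⟨p0, hp0S⟩ := hne
  obtain ⟨b, hbH, hbub⟩ := hbdd
  set φ : (Fin n → ℝ) → EReal := fun x => ⨆ p : S, ((p.1.2 x : ℝ) : EReal) with hφdef
  set g : (Fin n → ℝ) → EReal := baireLower Ω φ with hgdef
  set s2 : (Fin n → ℝ) → EReal := baireUpper Ω g with hs2def
  set s1 : (Fin n → ℝ) → EReal := baireLower Ω s2 with hs1def
  have hgs2 : ∀ y ∈ Ω, g y ≤ s2 y := fun y hy => le_bu_self hy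
  have hs1s2 : ∀ x ∈ Ω, s1 x ≤ s2 x := fun x hx => bl_le_self hx
  have hgs1 : ∀ x ∈ Ω, g x ≤ s1 x := fun x hx =>
    (bl_idem φ x).symm.trans_le (bl_mono hgs2 x)
  -- facts for elements of S
  have hSfacts : ∀ p ∈ S, ∀ x ∈ Ω,
      ((p.1 x : ℝ) : EReal) ≤ s1 x ∧ ((p.2 x : ℝ) : EReal) ≤ s2 x := by
    intro p hp x hx
    have keys := hcont_keys (hS p hp)
    have hP2φ : ∀ y : Fin n → ℝ, ((p.2 y : ℝ) : EReal) ≤ φ y := fun y =>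
      le_iSup_of_le (⟨p, hp⟩ : S) le_rfl
    have hP1g : ∀ y ∈ Ω, ((p.1 y : ℝ) : EReal) ≤ g y := fun y hy =>
      ((keys y hy).2).symm.trans_le (bl_mono (fun z _ => hP2φ z) y)
    have hP2s2 : ∀ y ∈ Ω, ((p.2 y : ℝ) : EReal) ≤ s2 y := fun y hy =>
      ((keys y hy).1).symm.trans_le (bu_mono hP1g y)
    exact ⟨((keys x hx).2).symm.trans_le (bl_mono hP2s2 x), hP2s2 x hx⟩
  -- facts for upper bounds of S
  have hBfacts : ∀ q, HContR Ω q → (∀ p ∈ S, leH Ω p q) → ∀ x ∈ Ω,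
      s1 x ≤ ((q.1 x : ℝ) : EReal) ∧ s2 x ≤ ((q.2 x : ℝ) : EReal) := by
    intro q hq hub x hx
    have keys := hcont_keys hq
    have hφB : ∀ y ∈ Ω, φ y ≤ ((q.2 y : ℝ) : EReal) := fun y hy =>
      iSup_le fun p => EReal.coe_le_coe_iff.2 ((hub p.1 p.2 y hy).2)
    have hgB1 : ∀ y ∈ Ω, g y ≤ ((q.1 y : ℝ) : EReal) := fun y hy =>
      (bl_mono hφB y).trans_eq (keys y hy).2
    have hs2B2 : ∀ y ∈ Ω, s2 y ≤ ((q.2 y : ℝ) : EReal) := fun y hy =>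
      (bu_mono hgB1 y).trans_eq (keys y hy).1
    exact ⟨(bl_mono hs2B2 x).trans_eq (keys x hx).2, hs2B2 x hx⟩
  -- finiteness of s1, s2 on Ω
  have hfin1 : ∀ x ∈ Ω, (((s1 x).toReal : ℝ) : EReal) = s1 x := fun x hx =>
    EReal.coe_toReal
      ((((hs1s2 x hx).trans (hBfacts b hbH hbub x hx).2)).trans_lt (EReal.coe_lt_top _)).ne
      (((EReal.bot_lt_coe _).trans_le (hSfacts p0 hp0S x hx).1)).ne'
  have hfin2 : ∀ x ∈ Ω, (((s2 x).toReal : ℝ) : EReal) = s2 x := fun x hx =>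
    EReal.coe_toReal
      (((hBfacts b hbH hbub x hx).2).trans_lt (EReal.coe_lt_top _)).ne
      (((EReal.bot_lt_coe _).trans_le ((hSfacts p0 hp0S x hx).1.trans (hs1s2 x hx)))).ne'
  refine ⟨(fun x => (s1 x).toReal, fun x => (s2 x).toReal), ?_, ?_, ?_⟩
  · -- H-continuity of s
    constructor
    · -- S-continuity
      refine ⟨fun x hx => (hfin1 x hx).le.trans ((hs1s2 x hx).trans (hfin2 x hx).ge), ?_⟩
      intro x hx
      constructor
      · exact (bl_congr hfin1 x).trans ((bl_idem s2 x).trans (hfin1 x hx).symm)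
      · exact (bu_congr hfin2 x).trans ((bu_idem g x).trans (hfin2 x hx).symm)
    · -- minimality
      intro v hv hincl x hx
      have hv1ge : ∀ y ∈ Ω, s1 y ≤ v.1 y := fun y hy =>
        (hfin1 y hy).symm.trans_le (hincl y hy).1
      have hv2le : ∀ y ∈ Ω, v.2 y ≤ s2 y := fun y hy =>
        ((hincl y hy).2).trans_eq (hfin2 y hy)
      have hv2 : ∀ y ∈ Ω, v.2 y = s2 y := by
        intro y hy
        refine le_antisymm (hv2le y hy) ?_
        have : s2 y ≤ baireUpper Ω v.2 y := by
          refine (bu_mono (fun z hz => ?_) y).trans (bu_mono (hv.1) y)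
          exact (hgs1 z hz).trans (hv1ge z hz)
        exact this.trans_eq (hv.2 y hy).2
      have hv1 : ∀ y ∈ Ω, v.1 y = s1 y := by
        intro y hy
        refine le_antisymm ?_ (hv1ge y hy)
        calc v.1 y = baireLower Ω v.1 y := ((hv.2 y hy).1).symm
          _ ≤ baireLower Ω v.2 y := bl_mono hv.1 y
          _ = s1 y := bl_congr hv2 y
      exact ⟨(hv1 x hx).trans (hfin1 x hx).symm, (hv2 x hx).trans (hfin2 x hx).symm⟩
  · -- upper bound
    intro p hp x hx
    have h := hSfacts p hp x hx
    constructor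
    · exact EReal.coe_le_coe_iff.1 (h.1.trans_eq (hfin1 x hx).symm)
    · exact EReal.coe_le_coe_iff.1 (h.2.trans_eq (hfin2 x hx).symm)
  · -- least upper bound
    intro q hq hub x hx
    have h := hBfacts q hq hub x hx
    constructor
    · exact EReal.coe_le_coe_iff.1 ((hfin1 x hx).trans_le h.1)
    · exact EReal.coe_le_coe_iff.1 ((hfin2 x hx).trans_le h.2)
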